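/- arXiv:2404.12589 — 2 statements merged into one kernel-verified Lean document; each statement's English description precedes it below -/
import Mathlib

section
/- Let 𝒳 = 𝒳⁽¹⁾ × ⋯ × 𝒳⁽ᵈ⁾ be a finite product state space, fix i ∈ ⟦d⟧, let π ∈ 𝒫(𝒳) be strictly positive, let P ∈ ℒ(𝒳) have strictly positive entries, and let L_j ∈ ℒ(𝒳⁽ʲ⁾) with strictly positive entries be prescribed for all j ≠ i. Let f(t) = (t^α − 1)/(α − 1) with α ∈ (0,1) ∪ (1,∞), which generates the α-divergence. Then the unique minimizer over L ∈ ℒ(𝒳⁽ⁱ⁾) of D_f^π(P ‖ (⊗_{j<i} L_j) ⊗ L ⊗ (⊗_{j>i} L_j)) is the transition matrix L⁽ⁱ⁾_* whose rows are given by L⁽ⁱ⁾_*(xⁱ,yⁱ) ∝ ( Σ_{x^{(−i)},y^{(−i)}} π(x) (∏_{j≠i} L_j(x^j,y^j))^{1−α} P(x,y)^α )^{1/α}, normalized so that each row sums to 1. -/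
/-
If `L` is stochastic, so is `Q = L ⊗ (⊗_{j ≠ i} L_j)`, and the α-divergence becomes
`D(L) = (J(L) - 1) / (α - 1)` with `J(L) = ∑_{a,b} L(a,b)^{1-α} A(a,b)`, where `A(a,b)` sums
`π(x) (∏_{j ≠ i} L_j(x^j, y^j))^{1-α} P(x,y)^α` over `xⁱ = a`, `yⁱ = b`; for `α > 1` a zero entry
of `L` gives `D(L) = ∞`. Minimising `(α - 1) J` splits into rows. On a row put `B = A^{1/α}`:
Jensen for `t ↦ t^α` (weights `L`, points `B / L`) when `α > 1`, or for `t ↦ t^{1-α}`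
(weights `B / ∑ B`, points `L / B`) when `α < 1`, gives `(α - 1) (∑ B)^α ≤ (α - 1) ∑ L^{1-α} B^α`,
and strict convexity leaves `L ∝ B` as the only equality case.
-/

open Filter Finset
open scoped Classical

/-- `p` is a probability mass on the finite set `Y`. -/
def IsProbMass {Y : Type*} [Fintype Y] (p : Y → ℝ) : Prop :=
  (∀ x, 0 ≤ p x) ∧ ∑ x, p x = 1

/-- `M` is a transition matrix (row-stochastic matrix) on the finite set `Y`. -/
def IsTransMat {Y : Type*} [Fintype Y] (M : Y → Y → ℝ) : Prop :=
  (∀ x y, 0 ≤ M x y) ∧ ∀ x, ∑ y, M x y = 1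

/-- The tensor product `⊗ᵢ Lᵢ` of transition matrices on a finite product space. -/
noncomputable def tensorMat {d : ℕ} {X : Fin d → Type*} (L : ∀ i, X i → X i → ℝ) :
    (∀ i, X i) → (∀ i, X i) → ℝ :=
  fun x y => ∏ i, L i (x i) (y i)

/-- `f'(∞) := lim_{x→0⁺} x f(1/x)`, as an extended real (realized as a limsup). -/
noncomputable def fPrimeInf (f : ℝ → ℝ) : EReal :=
  Filter.limsup (fun x : ℝ => ((x * f (1 / x) : ℝ) : EReal)) (nhdsWithin 0 (Set.Ioi 0))

/-- The term `L(x,y)·f(M(x,y)/L(x,y))` with the conventions `0·f(0/0) := 0` and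
`0·f(a/0) := a·f'(∞)` for `a > 0`. -/
noncomputable def fDivTerm (f : ℝ → ℝ) (m l : ℝ) : EReal :=
  if l = 0 then (if m = 0 then 0 else (m : EReal) * fPrimeInf f)
  else ((l * f (m / l) : ℝ) : EReal)

/-- The `f`-divergence `D_f^π(M ‖ L)` between transition matrices, with the convention
`0·∞ := 0` (EReal multiplication). -/
noncomputable def fDiv {Y : Type*} [Fintype Y] (f : ℝ → ℝ) (π : Y → ℝ) (M L : Y → Y → ℝ) :
    EReal :=
  ∑ x, (π x : EReal) * ∑ y, fDivTerm f (M x y) (L x y)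

/-- `𝐙(x^{(−i)},y^{(−i)}) := ∏_{j ≠ i} L_j(x^j, y^j)`. -/
noncomputable def prodExceptI {d : ℕ} {X : Fin d → Type*} (i : Fin d)
    (Lfam : ∀ j, X j → X j → ℝ) (x y : ∀ j, X j) : ℝ :=
  ∏ j ∈ Finset.univ.erase i, Lfam j (x j) (y j)

/-- `Z(xⁱ,yⁱ) := Σ_{x^{(−i)},y^{(−i)}} π(x)·𝐙(x^{(−i)},y^{(−i)})`. -/
noncomputable def zConst {d : ℕ} {X : Fin d → Type*} [∀ i, Fintype (X i)]
    (π : (∀ j, X j) → ℝ) (i : Fin d) (Lfam : ∀ j, X j → X j → ℝ) (xi yi : X i) : ℝ :=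
  ∑ x : ∀ j, X j, ∑ y : ∀ j, X j,
    if x i = xi ∧ y i = yi then π x * prodExceptI i Lfam x y else 0

/-- The row-normalized matrix with entries proportional to
`(Σ_{x^{(−i)},y^{(−i)}} π(x) (∏_{j≠i} L_j(x^j,y^j))^{1−α} P(x,y)^α)^{1/α}`. -/
noncomputable def alphaStar {d : ℕ} {X : Fin d → Type*} [∀ i, Fintype (X i)] (α : ℝ)
    (π : (∀ j, X j) → ℝ) (P : (∀ j, X j) → (∀ j, X j) → ℝ) (i : Fin d)
    (Lfam : ∀ j, X j → X j → ℝ) : X i → X i → ℝ :=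
  fun xi yi =>
    (∑ x : ∀ j, X j, ∑ y : ∀ j, X j,
        if x i = xi ∧ y i = yi then
          π x * prodExceptI i Lfam x y ^ (1 - α) * P x y ^ α else 0) ^ (1 / α) /
      ∑ zi : X i, (∑ x : ∀ j, X j, ∑ y : ∀ j, X j,
        if x i = xi ∧ y i = zi then
          π x * prodExceptI i Lfam x y ^ (1 - α) * P x y ^ α else 0) ^ (1 / α)

open Topology

theorem EReal.coe_finsetSum {ι : Type*} (s : Finset ι) (f : ι → ℝ) :
    ((∑ i ∈ s, f i : ℝ) : EReal) = ∑ i ∈ s, (f i : EReal) :=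
  map_sum (⟨⟨((↑) : ℝ → EReal), EReal.coe_zero⟩, EReal.coe_add⟩ : ℝ →+ EReal) f s

theorem EReal.finsetSum_ne_bot {ι : Type*} {s : Finset ι} {f : ι → EReal}
    (h : ∀ i ∈ s, f i ≠ ⊥) : ∑ i ∈ s, f i ≠ ⊥ :=
  Finset.sum_induction f (· ≠ ⊥) (fun _ _ ha hb => EReal.add_ne_bot_iff.2 ⟨ha, hb⟩)
    EReal.zero_ne_bot h

theorem EReal.finsetSum_eq_top {ι : Type*} {s : Finset ι} {f : ι → EReal}
    (h : ∀ i ∈ s, f i ≠ ⊥) {i₀ : ι} (hi₀ : i₀ ∈ s) (htop : f i₀ = ⊤) : ∑ i ∈ s, f i = ⊤ := by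
  rw [← Finset.add_sum_erase s f hi₀, htop]
  exact EReal.top_add_of_ne_bot (EReal.finsetSum_ne_bot fun i hi => h i (mem_of_mem_erase hi))

lemma EReal.coe_mul_ne_bot_of_pos {c : ℝ} (hc : 0 < c) {z : EReal} (hz : z ≠ ⊥) :
    (c : EReal) * z ≠ ⊥ :=
  (EReal.mul_ne_bot _ _).2
    ⟨.inl (EReal.coe_ne_bot c), .inr hz, .inl (EReal.coe_ne_top c), .inl (mod_cast hc.le)⟩

lemma IsProbMass.nonempty {Y : Type*} [Fintype Y] {p : Y → ℝ} (hp : IsProbMass p) :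
    Nonempty Y :=
  univ_nonempty_iff.1 (nonempty_of_sum_ne_zero (hp.2 ▸ one_ne_zero))

lemma mul_rpow_div_self {w p : ℝ} (hw : 0 < w) (hp : 0 ≤ p) (γ : ℝ) :
    w * (p / w) ^ γ = w ^ (1 - γ) * p ^ γ := by
  rw [Real.div_rpow hp hw.le, Real.rpow_sub hw, Real.rpow_one]
  ring

section PowerMean

variable {Y : Type*} [Fintype Y] {γ : ℝ} {w p : Y → ℝ}

lemma rpow_sum_le_sum_rpow_mul_rpow (hγ : 1 < γ) (hw : ∀ y, 0 < w y) (hw1 : ∑ y, w y = 1)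
    (hp : ∀ y, 0 ≤ p y) :
    (∑ y, p y) ^ γ ≤ ∑ y, w y ^ (1 - γ) * p y ^ γ ∧
      ((∑ y, p y) ^ γ = ∑ y, w y ^ (1 - γ) * p y ^ γ → ∀ j k, p j / w j = p k / w k) := by
  have hf := strictConvexOn_rpow hγ
  have hmem : ∀ y ∈ univ, p y / w y ∈ Set.Ici (0 : ℝ) := fun y _ => div_nonneg (hp y) (hw y).le
  have hmean : ∑ y, w y • (p y / w y) = ∑ y, p y :=
    sum_congr rfl fun y _ => mul_div_cancel₀ _ (hw y).ne'
  have hpow : ∑ y, w y • (p y / w y) ^ γ = ∑ y, w y ^ (1 - γ) * p y ^ γ :=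
    sum_congr rfl fun y _ => mul_rpow_div_self (hw y) (hp y) γ
  refine ⟨?_, fun heq j k => ?_⟩
  · simpa only [hmean, hpow] using hf.convexOn.map_sum_le (fun y _ => (hw y).le) hw1 hmem
  · exact (hf.map_sum_eq_iff_of_pos (fun y _ => hw y) hw1 hmem).1 (by rwa [hmean, hpow])
      (mem_univ j) (mem_univ k)

lemma sum_rpow_mul_rpow_le_rpow_sum (hγ0 : 0 < γ) (hγ1 : γ < 1) (hw : ∀ y, 0 < w y)
    (hw1 : ∑ y, w y = 1) (hp : ∀ y, 0 ≤ p y) :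
    ∑ y, w y ^ (1 - γ) * p y ^ γ ≤ (∑ y, p y) ^ γ ∧
      (∑ y, w y ^ (1 - γ) * p y ^ γ = (∑ y, p y) ^ γ → ∀ j k, p j / w j = p k / w k) := by
  have hf := Real.strictConcaveOn_rpow hγ0 hγ1
  have hmem : ∀ y ∈ univ, p y / w y ∈ Set.Ici (0 : ℝ) := fun y _ => div_nonneg (hp y) (hw y).le
  have hmean : ∑ y, w y • (p y / w y) = ∑ y, p y :=
    sum_congr rfl fun y _ => mul_div_cancel₀ _ (hw y).ne'
  have hpow : ∑ y, w y • (p y / w y) ^ γ = ∑ y, w y ^ (1 - γ) * p y ^ γ :=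
    sum_congr rfl fun y _ => mul_rpow_div_self (hw y) (hp y) γ
  refine ⟨?_, fun heq j k => ?_⟩
  · simpa only [hmean, hpow] using hf.concaveOn.le_map_sum (fun y _ => (hw y).le) hw1 hmem
  · exact (hf.map_sum_eq_iff_of_pos (fun y _ => hw y) hw1 hmem).1 (by rwa [hmean, hpow, eq_comm])
      (mem_univ j) (mem_univ k)

end PowerMean

lemma div_sum_eq_div_sum_of_div_eq {Y : Type*} [Fintype Y] {u v : Y → ℝ} (hv : ∀ y, 0 < v y)
    (hu : ∑ y, u y ≠ 0) (h : ∀ j k, u j / v j = u k / v k) (y : Y) :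
    u y / ∑ z, u z = v y / ∑ z, v z := by
  set c := u y / v y with hc
  have huv : ∀ z, u z = c * v z := fun z => by rw [hc, ← h z y, div_mul_cancel₀ _ (hv z).ne']
  have hsum : ∑ z, u z = c * ∑ z, v z := by
    rw [mul_sum]
    exact sum_congr rfl fun z _ => huv z
  rw [hsum, huv y, mul_div_mul_left _ _ (left_ne_zero_of_mul (hsum ▸ hu))]

section RowOptimum

variable {Y : Type*} [Fintype Y] [Nonempty Y] {α : ℝ} {B L : Y → ℝ}

lemma sum_rpow_mul_rpow_div_sum (hB : ∀ y, 0 < B y) (α : ℝ) :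
    ∑ y, (B y / ∑ z, B z) ^ (1 - α) * B y ^ α = (∑ z, B z) ^ α := by
  have hT : 0 < ∑ z, B z := sum_pos (fun y _ => hB y) univ_nonempty
  have hsplit : ∀ x : ℝ, 0 < x → x ^ (1 - α) * x ^ α = x := fun x hx => by
    rw [← Real.rpow_add hx, sub_add_cancel, Real.rpow_one]
  calc ∑ y, (B y / ∑ z, B z) ^ (1 - α) * B y ^ α
      = ∑ y, B y / (∑ z, B z) ^ (1 - α) := sum_congr rfl fun y _ => by
        rw [Real.div_rpow (hB y).le hT.le, div_mul_eq_mul_div, hsplit _ (hB y)]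
    _ = (∑ z, B z) ^ α := by
        rw [← sum_div, div_eq_iff (Real.rpow_pos_of_pos hT _).ne', mul_comm, hsplit _ hT]

lemma sub_one_mul_rpow_sum_le (hα : α ∈ Set.Ioo (0 : ℝ) 1 ∪ Set.Ioi 1) (hB : ∀ y, 0 < B y)
    (hL : ∀ y, 0 ≤ L y) (hL1 : ∑ y, L y = 1) (hLpos : α < 1 ∨ ∀ y, 0 < L y) :
    (α - 1) * (∑ y, B y) ^ α ≤ (α - 1) * ∑ y, L y ^ (1 - α) * B y ^ α ∧
      (∑ y, L y ^ (1 - α) * B y ^ α = (∑ y, B y) ^ α → ∀ y, L y = B y / ∑ z, B z) := by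
  have hT : 0 < ∑ z, B z := sum_pos (fun y _ => hB y) univ_nonempty
  rcases hα with ⟨hα0, hα1⟩ | (hα1 : 1 < α)
  · have hw : ∀ y, 0 < B y / ∑ z, B z := fun y => div_pos (hB y) hT
    have hw1 : ∑ y, B y / ∑ z, B z = 1 := by rw [← sum_div, div_self hT.ne']
    obtain ⟨hle, heq⟩ :=
      sum_rpow_mul_rpow_le_rpow_sum (γ := 1 - α) (by linarith) (by linarith) hw hw1 hL
    have hnorm : ∑ y, (B y / ∑ z, B z) ^ (1 - (1 - α)) * L y ^ (1 - α) =
        (∑ y, L y ^ (1 - α) * B y ^ α) / (∑ z, B z) ^ α := by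
      rw [sub_sub_cancel, sum_div]
      exact sum_congr rfl fun y _ => by rw [Real.div_rpow (hB y).le hT.le]; ring
    rw [hnorm, hL1, Real.one_rpow, div_le_one (Real.rpow_pos_of_pos hT _)] at hle
    refine ⟨mul_le_mul_of_nonpos_left hle (by linarith), fun hS y => ?_⟩
    have hprop := heq (by rw [hnorm, hS, div_self (Real.rpow_pos_of_pos hT _).ne', hL1,
      Real.one_rpow])
    simpa [hL1, hw1] using div_sum_eq_div_sum_of_div_eq hw (by rw [hL1]; exact one_ne_zero) hprop y
  · have hLpos := hLpos.resolve_left (not_lt.2 (le_of_lt hα1))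
    obtain ⟨hle, heq⟩ := rpow_sum_le_sum_rpow_mul_rpow hα1 hLpos hL1 fun y => (hB y).le
    refine ⟨mul_le_mul_of_nonneg_left hle (by linarith), fun hS y => ?_⟩
    have hprop := heq hS.symm
    simpa [hL1] using (div_sum_eq_div_sum_of_div_eq hLpos hT.ne' hprop y).symm

end RowOptimum

noncomputable def rowNormalize {Y : Type*} [Fintype Y] (B : Y → Y → ℝ) (a b : Y) : ℝ :=
  B a b / ∑ z, B a z

noncomputable def alphaCost {Y : Type*} [Fintype Y] (α : ℝ) (W L : Y → Y → ℝ) : ℝ :=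
  ∑ a, ∑ b, L a b ^ (1 - α) * W a b

section Matrix

variable {Y : Type*} [Fintype Y] [Nonempty Y]

lemma rowNormalize_pos {B : Y → Y → ℝ} (hB : ∀ a b, 0 < B a b) (a b : Y) :
    0 < rowNormalize B a b :=
  div_pos (hB a b) (sum_pos (fun z _ => hB a z) univ_nonempty)

lemma isTransMat_rowNormalize {B : Y → Y → ℝ} (hB : ∀ a b, 0 < B a b) :
    IsTransMat (rowNormalize B) :=
  ⟨fun a b => (rowNormalize_pos hB a b).le, fun a => by
    simp only [rowNormalize]
    rw [← sum_div, div_self (sum_pos (fun z _ => hB a z) univ_nonempty).ne']⟩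

lemma sub_one_mul_alphaCost_rowNormalize_le {α : ℝ} (hα : α ∈ Set.Ioo (0 : ℝ) 1 ∪ Set.Ioi 1)
    {W : Y → Y → ℝ} (hW : ∀ a b, 0 < W a b) {L : Y → Y → ℝ} (hL : IsTransMat L)
    (hLpos : α < 1 ∨ ∀ a b, 0 < L a b) :
    (α - 1) * alphaCost α W (rowNormalize fun a b => W a b ^ (1 / α)) ≤
        (α - 1) * alphaCost α W L ∧
      (alphaCost α W L = alphaCost α W (rowNormalize fun a b => W a b ^ (1 / α)) →
        L = rowNormalize fun a b => W a b ^ (1 / α)) := by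
  have hα0 : 0 < α := hα.elim (·.1) (one_pos.trans ·)
  have hα1 : α - 1 ≠ 0 := sub_ne_zero.2 (hα.elim (·.2.ne) (ne_of_gt ·))
  set B : Y → Y → ℝ := fun a b => W a b ^ (1 / α)
  have hB : ∀ a b, 0 < B a b := fun a b => Real.rpow_pos_of_pos (hW a b) _
  have hW' : W = fun a b => B a b ^ α := funext₂ fun a b => by
    simp only [B]
    rw [one_div, Real.rpow_inv_rpow (hW a b).le hα0.ne']
  have hrow := fun a => sub_one_mul_rpow_sum_le hα (hB a) (hL.1 a) (hL.2 a)
    (hLpos.imp_right fun h => h a)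
  have hopt : (α - 1) * alphaCost α W (rowNormalize B) = ∑ a, (α - 1) * (∑ b, B a b) ^ α := by
    rw [hW', alphaCost, mul_sum]
    exact sum_congr rfl fun a _ => congrArg ((α - 1) * ·) (sum_rpow_mul_rpow_div_sum (hB a) α)
  have hcost : (α - 1) * alphaCost α W L =
      ∑ a, (α - 1) * ∑ b, L a b ^ (1 - α) * B a b ^ α := by
    rw [hW', alphaCost, mul_sum]
  refine ⟨?_, fun heq => funext₂ fun a b => ?_⟩
  · rw [hopt, hcost]
    exact sum_le_sum fun a _ => (hrow a).1
  · have hrows := (sum_eq_sum_iff_of_le fun a _ => (hrow a).1).1 (by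
      rw [← hopt, ← hcost, heq])
    exact (hrow a).2 (mul_left_cancel₀ hα1 (hrows a (mem_univ a))).symm b

end Matrix

noncomputable abbrev alphaGen (α : ℝ) : ℝ → ℝ := fun t => (t ^ α - 1) / (α - 1)

lemma fPrimeInf_alphaGen (α : ℝ) :
    fPrimeInf (alphaGen α) =
      limsup (fun x : ℝ => (((x ^ (1 - α) - x) / (α - 1) : ℝ) : EReal)) (𝓝[>] 0) := by
  refine limsup_congr (eventually_nhdsWithin_of_forall fun x (hx : 0 < x) => ?_)
  rw [mul_div_assoc', mul_sub, mul_one, mul_rpow_div_self hx zero_le_one, Real.one_rpow, mul_one]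

lemma fPrimeInf_alphaGen_of_lt_one {α : ℝ} (hα : α < 1) : fPrimeInf (alphaGen α) = 0 := by
  have hcont := (Real.continuousAt_rpow_const 0 (1 - α) (.inr (by linarith))).tendsto
  have h : Tendsto (fun x : ℝ => (x ^ (1 - α) - x) / (α - 1)) (𝓝 0) (𝓝 0) := by
    simpa [Real.zero_rpow (by linarith : (1:ℝ) - α ≠ 0)] using
      (hcont.sub tendsto_id).div_const (α - 1)
  rw [fPrimeInf_alphaGen]
  exact (EReal.tendsto_coe.2 (h.mono_left nhdsWithin_le_nhds)).limsup_eq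

lemma fPrimeInf_alphaGen_of_one_lt {α : ℝ} (hα : 1 < α) : fPrimeInf (alphaGen α) = ⊤ := by
  have hneg : Tendsto (fun x : ℝ => -x) (𝓝[>] 0) (𝓝 0) := by
    simpa using (tendsto_neg (0 : ℝ)).mono_left nhdsWithin_le_nhds
  have h : Tendsto (fun x : ℝ => (x ^ (1 - α) - x) / (α - 1)) (𝓝[>] 0) atTop := by
    simpa [sub_eq_add_neg] using
      ((tendsto_rpow_neg_nhdsGT_zero (by linarith)).atTop_add hneg).atTop_div_const
        (sub_pos.2 hα)
  rw [fPrimeInf_alphaGen]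
  exact (EReal.tendsto_coe_atTop.comp h).limsup_eq

lemma fDivTerm_alphaGen {α m l : ℝ} (hm : 0 ≤ m) (hl : 0 ≤ l) (h : α < 1 ∨ 0 < l) :
    fDivTerm (alphaGen α) m l = (((m ^ α * l ^ (1 - α) - l) / (α - 1) : ℝ) : EReal) := by
  rcases hl.eq_or_lt with rfl | hl
  · have hα : α < 1 := h.resolve_right (lt_irrefl 0)
    rw [Real.zero_rpow (by linarith), fDivTerm, if_pos rfl, fPrimeInf_alphaGen_of_lt_one hα]
    split_ifs <;> simp
  · rw [fDivTerm, if_neg hl.ne', alphaGen, mul_div_assoc', mul_sub, mul_one,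
      mul_rpow_div_self hl hm, mul_comm (l ^ _)]

lemma fDivTerm_alphaGen_zero_right {α m : ℝ} (hα : 1 < α) (hm : 0 < m) :
    fDivTerm (alphaGen α) m 0 = ⊤ := by
  rw [fDivTerm, if_pos rfl, if_neg hm.ne', fPrimeInf_alphaGen_of_one_lt hα,
    EReal.coe_mul_top_of_pos hm]

lemma fDivTerm_alphaGen_ne_bot {α m l : ℝ} (hα : 1 < α) (hm : 0 < m) :
    fDivTerm (alphaGen α) m l ≠ ⊥ := by
  unfold fDivTerm
  split_ifs
  · exact EReal.zero_ne_bot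
  · rw [fPrimeInf_alphaGen_of_one_lt hα, EReal.coe_mul_top_of_pos hm]
    exact top_ne_bot
  · exact EReal.coe_ne_bot _

section FDiv

variable {Y : Type*} [Fintype Y] {α : ℝ} {π : Y → ℝ} {P Q : Y → Y → ℝ}

lemma fDiv_alphaGen_eq_coe (hπ : IsProbMass π) (hP : ∀ x y, 0 ≤ P x y) (hQ : IsTransMat Q)
    (hQpos : α < 1 ∨ ∀ x y, 0 < Q x y) :
    fDiv (alphaGen α) π P Q =
      (((∑ x, ∑ y, π x * (P x y ^ α * Q x y ^ (1 - α)) - 1) / (α - 1) : ℝ) : EReal) := by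
  have hterm : ∀ x y, fDivTerm (alphaGen α) (P x y) (Q x y) =
      (((P x y ^ α * Q x y ^ (1 - α) - Q x y) / (α - 1) : ℝ) : EReal) := fun x y =>
    fDivTerm_alphaGen (hP x y) (hQ.1 x y) (hQpos.imp_right fun h => h x y)
  simp only [fDiv, hterm, ← EReal.coe_finsetSum, ← EReal.coe_mul, EReal.coe_eq_coe_iff]
  calc ∑ x, π x * ∑ y, (P x y ^ α * Q x y ^ (1 - α) - Q x y) / (α - 1)
      = ∑ x, (∑ y, π x * (P x y ^ α * Q x y ^ (1 - α)) - π x) / (α - 1) := by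
        refine sum_congr rfl fun x _ => ?_
        rw [← sum_div, sum_sub_distrib, hQ.2 x, mul_div_assoc', mul_sub, mul_one, mul_sum]
    _ = _ := by rw [← sum_div, sum_sub_distrib, hπ.2]

lemma fDiv_alphaGen_eq_top (hα : 1 < α) (hπ : ∀ x, 0 < π x) (hP : ∀ x y, 0 < P x y)
    {x₀ y₀ : Y} (hQ : Q x₀ y₀ = 0) :
    fDiv (alphaGen α) π P Q = ⊤ := by
  have hrow : ∀ x, ∑ y, fDivTerm (alphaGen α) (P x y) (Q x y) ≠ ⊥ := fun x =>
    EReal.finsetSum_ne_bot fun y _ => fDivTerm_alphaGen_ne_bot hα (hP x y)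
  refine EReal.finsetSum_eq_top (fun x _ => EReal.coe_mul_ne_bot_of_pos (hπ x) (hrow x))
    (mem_univ x₀) ?_
  rw [EReal.finsetSum_eq_top (fun y _ => fDivTerm_alphaGen_ne_bot hα (hP x₀ y)) (mem_univ y₀)
    (by rw [hQ]; exact fDivTerm_alphaGen_zero_right hα (hP x₀ y₀))]
  exact EReal.coe_mul_top_of_pos (hπ x₀)

end FDiv

lemma sum_sum_mul_eq_sum_sum_mul_fiber {Z W : Type*} [Fintype Z] [Fintype W] (φ : Z → W)
    (h : W → W → ℝ) (g : Z → Z → ℝ) :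
    ∑ x, ∑ y, h (φ x) (φ y) * g x y =
      ∑ a, ∑ b, h a b * ∑ x, ∑ y, if φ x = a ∧ φ y = b then g x y else 0 := by
  have hcollapse : ∀ x y, h (φ x) (φ y) * g x y =
      ∑ a, ∑ b, if φ x = a ∧ φ y = b then h a b * g x y else 0 := fun x y => by
    simp [ite_and]
  simp only [hcollapse, mul_sum, mul_ite, mul_zero,
    sum_comm (s := (univ : Finset Z)) (t := (univ : Finset W))]

section Product

variable {d : ℕ} {X : Fin d → Type*}

lemma tensorMat_update_apply (i : Fin d) (Lfam : ∀ j, X j → X j → ℝ) (L : X i → X i → ℝ)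
    (x y : ∀ j, X j) :
    tensorMat (Function.update Lfam i L) x y = L (x i) (y i) * prodExceptI i Lfam x y := by
  rw [tensorMat, prodExceptI, ← mul_prod_erase _ _ (mem_univ i), Function.update_self]
  exact congrArg _ (prod_congr rfl fun j hj => by
    rw [Function.update_of_ne (ne_of_mem_erase hj)])

lemma IsTransMat.tensorMat [∀ i, Fintype (X i)] {M : ∀ j, X j → X j → ℝ}
    (hM : ∀ j, IsTransMat (M j)) :
    IsTransMat (tensorMat M) :=
  ⟨fun _ _ => prod_nonneg fun j _ => (hM j).1 _ _, fun x => by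
    simp only [_root_.tensorMat]
    rw [← Fintype.prod_sum fun j b => M j (x j) b]
    exact prod_eq_one fun j _ => (hM j).2 (x j)⟩

lemma IsTransMat.update [∀ i, Fintype (X i)] {i : Fin d} {Lfam : ∀ j, X j → X j → ℝ}
    (hLfam : ∀ j, j ≠ i → IsTransMat (Lfam j)) {L : X i → X i → ℝ} (hL : IsTransMat L) (j : Fin d) :
    IsTransMat (Function.update Lfam i L j) := by
  rcases eq_or_ne j i with rfl | hj
  · rwa [Function.update_self]
  · rw [Function.update_of_ne hj]
    exact hLfam j hj

lemma prodExceptI_pos {i : Fin d} {Lfam : ∀ j, X j → X j → ℝ}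
    (hLfam : ∀ j, j ≠ i → ∀ a b, 0 < Lfam j a b) (x y : ∀ j, X j) :
    0 < prodExceptI i Lfam x y :=
  prod_pos fun j hj => hLfam j (ne_of_mem_erase hj) _ _

end Product

section AlphaWeight

variable {d : ℕ} {X : Fin d → Type*} [∀ i, Fintype (X i)]

noncomputable def alphaWeight (α : ℝ) (π : (∀ j, X j) → ℝ) (P : (∀ j, X j) → (∀ j, X j) → ℝ)
    (i : Fin d) (Lfam : ∀ j, X j → X j → ℝ) (a b : X i) : ℝ :=
  ∑ x : ∀ j, X j, ∑ y : ∀ j, X j,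
    if x i = a ∧ y i = b then π x * prodExceptI i Lfam x y ^ (1 - α) * P x y ^ α else 0

lemma alphaStar_eq_rowNormalize (α : ℝ) (π : (∀ j, X j) → ℝ)
    (P : (∀ j, X j) → (∀ j, X j) → ℝ) (i : Fin d) (Lfam : ∀ j, X j → X j → ℝ) :
    alphaStar α π P i Lfam = rowNormalize fun a b => alphaWeight α π P i Lfam a b ^ (1 / α) :=
  rfl

lemma alphaWeight_pos [Nonempty (∀ j, X j)] {α : ℝ} {π : (∀ j, X j) → ℝ} (hπ : ∀ x, 0 < π x)
    {P : (∀ j, X j) → (∀ j, X j) → ℝ} (hP : ∀ x y, 0 < P x y) {i : Fin d}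
    {Lfam : ∀ j, X j → X j → ℝ} (hLfam : ∀ j, j ≠ i → ∀ a b, 0 < Lfam j a b) (a b : X i) :
    0 < alphaWeight α π P i Lfam a b := by
  obtain ⟨z⟩ := ‹Nonempty (∀ j, X j)›
  have hterm : ∀ x y, 0 < π x * prodExceptI i Lfam x y ^ (1 - α) * P x y ^ α := fun x y =>
    mul_pos (mul_pos (hπ x) (Real.rpow_pos_of_pos (prodExceptI_pos hLfam x y) _))
      (Real.rpow_pos_of_pos (hP x y) _)
  have hnonneg : ∀ x y, 0 ≤ if x i = a ∧ y i = b then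
      π x * prodExceptI i Lfam x y ^ (1 - α) * P x y ^ α else 0 := fun x y =>
    ite_nonneg (hterm x y).le le_rfl
  refine sum_pos' (fun x _ => sum_nonneg fun y _ => hnonneg x y)
    ⟨Function.update z i a, mem_univ _, sum_pos' (fun y _ => hnonneg _ y)
      ⟨Function.update z i b, mem_univ _, ?_⟩⟩
  rw [if_pos ⟨Function.update_self .., Function.update_self ..⟩]
  exact hterm _ _

lemma sum_sum_mul_rpow_tensorMat_update (α : ℝ) (π : (∀ j, X j) → ℝ)
    (P : (∀ j, X j) → (∀ j, X j) → ℝ) (i : Fin d) {Lfam : ∀ j, X j → X j → ℝ}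
    (hZ : ∀ x y, 0 ≤ prodExceptI i Lfam x y) {L : X i → X i → ℝ} (hL : ∀ a b, 0 ≤ L a b) :
    ∑ x, ∑ y, π x * (P x y ^ α * tensorMat (Function.update Lfam i L) x y ^ (1 - α)) =
      alphaCost α (alphaWeight α π P i Lfam) L := by
  refine Eq.trans ?_ (sum_sum_mul_eq_sum_sum_mul_fiber (fun x : ∀ j, X j => x i)
    (fun a b => L a b ^ (1 - α)) fun x y => π x * prodExceptI i Lfam x y ^ (1 - α) * P x y ^ α)
  refine sum_congr rfl fun x _ => sum_congr rfl fun y _ => ?_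
  rw [tensorMat_update_apply, Real.mul_rpow (hL _ _) (hZ x y)]
  ring

lemma fDiv_alphaGen_tensorMat_update {α : ℝ} {π : (∀ j, X j) → ℝ} (hπ : IsProbMass π)
    {P : (∀ j, X j) → (∀ j, X j) → ℝ} (hP : ∀ x y, 0 ≤ P x y) {i : Fin d}
    {Lfam : ∀ j, X j → X j → ℝ} (hLfam : ∀ j, j ≠ i → IsTransMat (Lfam j))
    (hLpos : ∀ j, j ≠ i → ∀ a b, 0 < Lfam j a b) {L : X i → X i → ℝ} (hL : IsTransMat L)
    (hLpos' : α < 1 ∨ ∀ a b, 0 < L a b) :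
    fDiv (alphaGen α) π P (tensorMat (Function.update Lfam i L)) =
      (((alphaCost α (alphaWeight α π P i Lfam) L - 1) / (α - 1) : ℝ) : EReal) := by
  have hQpos : α < 1 ∨ ∀ x y, 0 < tensorMat (Function.update Lfam i L) x y :=
    hLpos'.imp_right fun h x y => by
      rw [tensorMat_update_apply]
      exact mul_pos (h _ _) (prodExceptI_pos hLpos x y)
  rw [fDiv_alphaGen_eq_coe hπ hP (IsTransMat.tensorMat (IsTransMat.update hLfam hL)) hQpos,
    sum_sum_mul_rpow_tensorMat_update α π P i (fun x y => (prodExceptI_pos hLpos x y).le) hL.1]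

end AlphaWeight

lemma div_le_div_of_mul_le_mul_self {c u v : ℝ} (hc : c ≠ 0) (h : c * u ≤ c * v) :
    u / c ≤ v / c := by
  have hsq : ∀ t, t / c = c * t / c ^ 2 := fun t => by field_simp
  rw [hsq u, hsq v]
  exact div_le_div_of_nonneg_right h (sq_nonneg c)

theorem stmt9_general {d : ℕ} {X : Fin d → Type*} [∀ i, Fintype (X i)] (i : Fin d) (α : ℝ)
    (hα : α ∈ Set.Ioo (0 : ℝ) 1 ∪ Set.Ioi (1 : ℝ))
    (π : (∀ j, X j) → ℝ) (hπ : IsProbMass π) (hπpos : ∀ x, 0 < π x)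
    (P : (∀ j, X j) → (∀ j, X j) → ℝ) (hPpos : ∀ x y, 0 < P x y)
    (Lfam : ∀ j, X j → X j → ℝ) (hLfam : ∀ j, j ≠ i → IsTransMat (Lfam j))
    (hLpos : ∀ j, j ≠ i → ∀ a b, 0 < Lfam j a b) :
    IsTransMat (alphaStar α π P i Lfam) ∧
      ∀ L : X i → X i → ℝ, IsTransMat L →
        fDiv (fun t => (t ^ α - 1) / (α - 1)) π P
            (tensorMat (Function.update Lfam i (alphaStar α π P i Lfam))) ≤
          fDiv (fun t => (t ^ α - 1) / (α - 1)) π P (tensorMat (Function.update Lfam i L)) ∧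
        (fDiv (fun t => (t ^ α - 1) / (α - 1)) π P (tensorMat (Function.update Lfam i L)) =
            fDiv (fun t => (t ^ α - 1) / (α - 1)) π P
              (tensorMat (Function.update Lfam i (alphaStar α π P i Lfam))) →
          L = alphaStar α π P i Lfam) := by
  have hne : Nonempty (∀ j, X j) := hπ.nonempty
  have : Nonempty (X i) := ⟨hne.some i⟩
  have hW := alphaWeight_pos (α := α) hπpos hPpos hLpos
  have hstarPos := rowNormalize_pos fun a b => Real.rpow_pos_of_pos (hW a b) (1 / α)
  have hstar : IsTransMat (alphaStar α π P i Lfam) :=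
    isTransMat_rowNormalize fun a b => Real.rpow_pos_of_pos (hW a b) _
  have hD := fun L (hL : IsTransMat L) =>
    fDiv_alphaGen_tensorMat_update (α := α) hπ (fun x y => (hPpos x y).le) hLfam hLpos hL
  refine ⟨hstar, fun L hL => ?_⟩
  rw [hD _ hstar (.inr hstarPos)]
  by_cases hzero : 1 < α ∧ ∃ a b, L a b = 0
  · obtain ⟨hα1, a, b, hab⟩ := hzero
    rw [fDiv_alphaGen_eq_top hα1 hπpos hPpos (x₀ := Function.update hne.some i a)
      (y₀ := Function.update hne.some i b) (by simp [tensorMat_update_apply, hab])]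
    exact ⟨le_top, fun h => absurd h.symm (EReal.coe_ne_top _)⟩
  have hLpos' : α < 1 ∨ ∀ a b, 0 < L a b := by
    rcases hα with hα | hα
    · exact .inl hα.2
    · exact .inr fun a b => (hL.1 a b).lt_of_ne' fun h => hzero ⟨hα, a, b, h⟩
  have hα1 : α - 1 ≠ 0 := sub_ne_zero.2 (hα.elim (·.2.ne) (ne_of_gt ·))
  obtain ⟨hle, heq⟩ := sub_one_mul_alphaCost_rowNormalize_le hα hW hL hLpos'
  rw [← alphaStar_eq_rowNormalize] at hle heq
  rw [hD L hL hLpos', EReal.coe_le_coe_iff, EReal.coe_eq_coe_iff, div_left_inj' hα1, sub_left_inj]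
  exact ⟨div_le_div_of_mul_le_mul_self hα1 (by linarith), heq⟩

/-- For the `α`-divergence (`f(t) = (t^α − 1)/(α − 1)`, `α ∈ (0,1) ∪ (1,∞)`), the unique
closest product chain with prescribed marginals `L_j`, `j ≠ i`, has `i`-th factor
`alphaStar α π P i Lfam`. -/
theorem stmt9 {d : ℕ} {X : Fin d → Type*} [∀ i, Fintype (X i)] (i : Fin d) (α : ℝ)
    (hα : α ∈ Set.Ioo (0 : ℝ) 1 ∪ Set.Ioi (1 : ℝ))
    (π : (∀ j, X j) → ℝ) (hπ : IsProbMass π) (hπpos : ∀ x, 0 < π x)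
    (P : (∀ j, X j) → (∀ j, X j) → ℝ) (hP : IsTransMat P) (hPpos : ∀ x y, 0 < P x y)
    (Lfam : ∀ j, X j → X j → ℝ) (hLfam : ∀ j, j ≠ i → IsTransMat (Lfam j))
    (hLpos : ∀ j, j ≠ i → ∀ a b, 0 < Lfam j a b) :
    IsTransMat (alphaStar α π P i Lfam) ∧
      ∀ L : X i → X i → ℝ, IsTransMat L →
        fDiv (fun t => (t ^ α - 1) / (α - 1)) π P
            (tensorMat (Function.update Lfam i (alphaStar α π P i Lfam))) ≤
          fDiv (fun t => (t ^ α - 1) / (α - 1)) π P (tensorMat (Function.update Lfam i L)) ∧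
        (fDiv (fun t => (t ^ α - 1) / (α - 1)) π P (tensorMat (Function.update Lfam i L)) =
            fDiv (fun t => (t ^ α - 1) / (α - 1)) π P
              (tensorMat (Function.update Lfam i (alphaStar α π P i Lfam))) →
          L = alphaStar α π P i Lfam) :=
  stmt9_general i α hα π hπ hπpos P hPpos Lfam hLfam hLpos
end

section
/- (Pythagorean identity for block factorizations.) Let 𝒳 = 𝒳⁽¹⁾ × ⋯ × 𝒳⁽ᵈ⁾ be a finite product state space and let (Sᵢ)_{i=1}^n be a partition of ⟦d⟧ into nonempty mutually disjoint blocks. Let π ∈ 𝒫(𝒳) be strictly positive, P ∈ ℒ(𝒳), and Lᵢ ∈ ℒ(𝒳^{(Sᵢ)}) for i = 1,…,n. Then D_KL^π(P ‖ ⊗_{i=1}^n Lᵢ) = D_KL^π(P ‖ ⊗_{i=1}^n P_π^{(Sᵢ)}) + Σ_{i=1}^n D_KL^{π^{(Sᵢ)}}(P_π^{(Sᵢ)} ‖ Lᵢ). Consequently ⊗_{i=1}^n P_π^{(Sᵢ)} is the unique minimizer of (L₁,…,Lₙ) ↦ D_KL^π(P ‖ ⊗_{i=1}^n Lᵢ).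 -/
open Filter Finset
open scoped Classical

/-- The term `M(x,y)·ln(M(x,y)/L(x,y))` with the conventions `0·ln(0/·) := 0` and
`a·ln(a/0) := +∞` for `a > 0`. -/
noncomputable def klTerm (m l : ℝ) : EReal :=
  if m = 0 then 0 else if l = 0 then ⊤ else ((m * Real.log (m / l) : ℝ) : EReal)

/-- The KL divergence `D_KL^π(M ‖ L)` between transition matrices, with the convention
`0·∞ := 0` (EReal multiplication). -/
noncomputable def klDiv {Y : Type*} [Fintype Y] (π : Y → ℝ) (M L : Y → Y → ℝ) : EReal :=
  ∑ x, (π x : EReal) * ∑ y, klTerm (M x y) (L x y)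

/-- The marginal `π⁽ˢ⁾` of `π` on the coordinates in `S`. -/
noncomputable def margS {d : ℕ} {X : Fin d → Type*} [∀ i, Fintype (X i)]
    (π : (∀ i, X i) → ℝ) (S : Finset (Fin d)) : (∀ j : S, X j.1) → ℝ :=
  fun xs => ∑ x : ∀ i, X i, if ∀ j : S, x j.1 = xs j then π x else 0

/-- The keep-`S`-in transition matrix `P_π⁽ˢ⁾` of `P` with respect to `π`. -/
noncomputable def keepS {d : ℕ} {X : Fin d → Type*} [∀ i, Fintype (X i)]
    (π : (∀ i, X i) → ℝ) (P : (∀ i, X i) → (∀ i, X i) → ℝ) (S : Finset (Fin d)) :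
    (∀ j : S, X j.1) → (∀ j : S, X j.1) → ℝ :=
  fun xs ys =>
    (∑ x : ∀ i, X i, ∑ y : ∀ i, X i,
        if (∀ j : S, x j.1 = xs j) ∧ (∀ j : S, y j.1 = ys j) then π x * P x y else 0) /
      margS π S xs

/-- The restriction of `x` to the coordinates in `S`. -/
noncomputable def restr {d : ℕ} {X : Fin d → Type*} (S : Finset (Fin d)) (x : ∀ i, X i) :
    ∀ j : S, X j.1 :=
  fun j => x j.1

/-- The tensor product over the blocks `S i` of transition matrices `L i` on `𝒳^{(S i)}`. -/
noncomputable def tensorBlocks {d n : ℕ} {X : Fin d → Type*} (S : Fin n → Finset (Fin d))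
    (L : ∀ i : Fin n, (∀ j : S i, X j.1) → (∀ j : S i, X j.1) → ℝ) :
    (∀ i, X i) → (∀ i, X i) → ℝ :=
  fun x y => ∏ i, L i (restr (S i) x) (restr (S i) y)

/-! Write `Qᵢ := P_π^{(Sᵢ)}`. Wherever `P(x,y) > 0`,
`log (P / ⊗ᵢ Lᵢ) = log (P / ⊗ᵢ Qᵢ) + Σᵢ log (Qᵢ / Lᵢ)`, and integrating the `i`-th term against
`π(x) P(x,y)` only sees the `Sᵢ`-coordinates, whose joint law is `π^{(Sᵢ)}(xs) Qᵢ(xs,ys)`: this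
is the identity. If some `Lᵢ` vanishes where `Qᵢ` does not, both sides are `+∞`. Minimality and
uniqueness then follow from Gibbs' inequality for each block, in the form
`m log (m / l) = l · klFun (m / l) + (m - l)` with `klFun ≥ 0` vanishing only at `1`. -/

open InformationTheory

lemma EReal.coe_finset_sum {α : Type*} (s : Finset α) (f : α → ℝ) :
    ((∑ a ∈ s, f a : ℝ) : EReal) = ∑ a ∈ s, (f a : EReal) :=
  map_sum (⟨⟨(↑), EReal.coe_zero⟩, EReal.coe_add⟩ : ℝ →+ EReal) f s

lemma EReal.finset_sum_ne_bot {α : Type*} {s : Finset α} {f : α → EReal}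
    (h : ∀ a ∈ s, f a ≠ ⊥) : ∑ a ∈ s, f a ≠ ⊥ := by
  induction s using Finset.cons_induction with
  | empty => simp
  | cons a s ha ih =>
    rw [sum_cons, EReal.add_ne_bot_iff]
    exact ⟨h a (mem_cons_self a s), ih fun b hb => h b (mem_cons_of_mem hb)⟩

lemma EReal.finset_sum_eq_top {α : Type*} {s : Finset α} {f : α → EReal}
    (h : ∀ a ∈ s, f a ≠ ⊥) {a : α} (ha : a ∈ s) (hfa : f a = ⊤) : ∑ b ∈ s, f b = ⊤ := by
  rw [← add_sum_erase s f ha, hfa]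
  exact EReal.top_add_of_ne_bot (EReal.finset_sum_ne_bot fun b hb => h b (mem_of_mem_erase hb))

lemma EReal.coe_mul_ne_bot {a : ℝ} (ha : 0 ≤ a) {x : EReal} (hx : x ≠ ⊥) :
    (a : EReal) * x ≠ ⊥ :=
  (EReal.mul_ne_bot _ _).2 ⟨Or.inl (EReal.coe_ne_bot a), Or.inr hx, Or.inl (EReal.coe_ne_top a),
    Or.inl (EReal.coe_nonneg.2 ha)⟩

lemma EReal.eq_zero_of_coe_add_eq {r : ℝ} {c : EReal} (h : (r : EReal) + c = r) : c = 0 := by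
  induction c with
  | bot => simp at h
  | top => simp at h
  | coe c => norm_cast at h; simpa using h

section Gibbs

variable {Y : Type*} [Fintype Y]

lemma mul_log_div_eq_mul_klFun_add {m l : ℝ} (hml : m ≠ 0 → l ≠ 0) :
    m * Real.log (m / l) = l * klFun (m / l) + (m - l) := by
  rcases eq_or_ne m 0 with rfl | hm
  · simp [klFun_zero]
  · have hl' := hml hm
    rw [klFun_apply]
    field_simp
    ring

lemma sum_mul_log_div_eq_sum_mul_klFun {m l : Y → ℝ} (hm : ∑ y, m y = 1) (hl : IsProbMass l)
    (hml : ∀ y, m y ≠ 0 → l y ≠ 0) :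
    ∑ y, m y * Real.log (m y / l y) = ∑ y, l y * klFun (m y / l y) := by
  simp_rw [mul_log_div_eq_mul_klFun_add (hml _), sum_add_distrib, sum_sub_distrib, hm,
    hl.2, sub_self, add_zero]

lemma mul_klFun_div_nonneg {m l : ℝ} (hm : 0 ≤ m) (hl : 0 ≤ l) : 0 ≤ l * klFun (m / l) :=
  mul_nonneg hl (klFun_nonneg (div_nonneg hm hl))

lemma sum_mul_log_div_nonneg {m l : Y → ℝ} (hm : IsProbMass m) (hl : IsProbMass l)
    (hml : ∀ y, m y ≠ 0 → l y ≠ 0) : 0 ≤ ∑ y, m y * Real.log (m y / l y) := by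
  rw [sum_mul_log_div_eq_sum_mul_klFun hm.2 hl hml]
  exact sum_nonneg fun y _ => mul_klFun_div_nonneg (hm.1 y) (hl.1 y)

lemma eq_of_sum_mul_log_div_eq_zero {m l : Y → ℝ} (hm : IsProbMass m) (hl : IsProbMass l)
    (hml : ∀ y, m y ≠ 0 → l y ≠ 0) (h : ∑ y, m y * Real.log (m y / l y) = 0) : m = l := by
  rw [sum_mul_log_div_eq_sum_mul_klFun hm.2 hl hml] at h
  have hterm :=
    (sum_eq_zero_iff_of_nonneg fun y _ => mul_klFun_div_nonneg (hm.1 y) (hl.1 y)).1 h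
  funext y
  rcases mul_eq_zero.1 (hterm y (mem_univ y)) with hly | hk
  · by_contra hne
    exact hml y (fun hmy => hne (hmy.trans hly.symm)) hly
  · rw [klFun_eq_zero_iff (div_nonneg (hm.1 y) (hl.1 y))] at hk
    exact (div_eq_one_iff_eq (fun hly => by simp [hly] at hk)).1 hk

end Gibbs

section KLDivergence

variable {Y : Type*} [Fintype Y]

-- `klDiv` without the `+∞` convention; no case split is needed since `0 * log _ = 0`.
noncomputable def klDivReal (π : Y → ℝ) (M L : Y → Y → ℝ) : ℝ :=
  ∑ x, π x * ∑ y, M x y * Real.log (M x y / L x y)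

lemma klTerm_ne_bot (m l : ℝ) : klTerm m l ≠ ⊥ := by
  unfold klTerm; split_ifs <;> simp [-EReal.coe_mul]

lemma klTerm_eq_coe {m l : ℝ} (h : m ≠ 0 → l ≠ 0) :
    klTerm m l = ((m * Real.log (m / l) : ℝ) : EReal) := by
  unfold klTerm
  rcases eq_or_ne m 0 with rfl | hm
  · simp
  · rw [if_neg hm, if_neg (h hm)]

lemma sum_klTerm_eq_coe {m l : Y → ℝ} (h : ∀ y, m y ≠ 0 → l y ≠ 0) :
    ∑ y, klTerm (m y) (l y) = ((∑ y, m y * Real.log (m y / l y) : ℝ) : EReal) := by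
  rw [EReal.coe_finset_sum]
  exact sum_congr rfl fun y _ => klTerm_eq_coe (h y)

lemma sum_klTerm_eq_top {m l : Y → ℝ} {y : Y} (hm : m y ≠ 0) (hl : l y = 0) :
    ∑ y, klTerm (m y) (l y) = ⊤ :=
  EReal.finset_sum_eq_top (fun _ _ => klTerm_ne_bot _ _) (mem_univ y) (by simp [klTerm, hm, hl])

lemma sum_klTerm_nonneg {m l : Y → ℝ} (hm : IsProbMass m) (hl : IsProbMass l) :
    0 ≤ ∑ y, klTerm (m y) (l y) := by
  by_cases hml : ∀ y, m y ≠ 0 → l y ≠ 0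
  · rw [sum_klTerm_eq_coe hml]
    exact EReal.coe_nonneg.2 (sum_mul_log_div_nonneg hm hl hml)
  · push Not at hml
    obtain ⟨y, hmy, hly⟩ := hml
    rw [sum_klTerm_eq_top hmy hly]
    exact le_top

lemma eq_of_sum_klTerm_eq_zero {m l : Y → ℝ} (hm : IsProbMass m) (hl : IsProbMass l)
    (h : ∑ y, klTerm (m y) (l y) = 0) : m = l := by
  by_cases hml : ∀ y, m y ≠ 0 → l y ≠ 0
  · rw [sum_klTerm_eq_coe hml, EReal.coe_eq_zero] at h
    exact eq_of_sum_mul_log_div_eq_zero hm hl hml h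
  · push Not at hml
    obtain ⟨y, hmy, hly⟩ := hml
    rw [sum_klTerm_eq_top hmy hly] at h
    exact absurd h EReal.top_ne_zero

lemma IsTransMat.isProbMass_row {M : Y → Y → ℝ} (hM : IsTransMat M) (x : Y) :
    IsProbMass (M x) :=
  ⟨hM.1 x, hM.2 x⟩

lemma klDiv_ne_bot {π : Y → ℝ} (hπ : ∀ x, 0 ≤ π x) (M L : Y → Y → ℝ) : klDiv π M L ≠ ⊥ :=
  EReal.finset_sum_ne_bot fun x _ => EReal.coe_mul_ne_bot (hπ x)
    (EReal.finset_sum_ne_bot fun _ _ => klTerm_ne_bot _ _)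

lemma klDiv_eq_coe_klDivReal (π : Y → ℝ) {M L : Y → Y → ℝ}
    (h : ∀ x y, M x y ≠ 0 → L x y ≠ 0) : klDiv π M L = (klDivReal π M L : EReal) := by
  rw [klDivReal, EReal.coe_finset_sum]
  exact sum_congr rfl fun x _ => by rw [EReal.coe_mul, sum_klTerm_eq_coe (h x)]

lemma klDiv_eq_top {π : Y → ℝ} (hπ : ∀ x, 0 ≤ π x) {M L : Y → Y → ℝ} {x y : Y} (hx : 0 < π x)
    (hM : M x y ≠ 0) (hL : L x y = 0) : klDiv π M L = ⊤ := by
  refine EReal.finset_sum_eq_top (fun x' _ => EReal.coe_mul_ne_bot (hπ x')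
    (EReal.finset_sum_ne_bot fun _ _ => klTerm_ne_bot _ _)) (mem_univ x) ?_
  rw [sum_klTerm_eq_top hM hL, EReal.coe_mul_top_of_pos hx]

lemma klDiv_nonneg {π : Y → ℝ} (hπ : ∀ x, 0 ≤ π x) {M L : Y → Y → ℝ} (hM : IsTransMat M)
    (hL : IsTransMat L) : 0 ≤ klDiv π M L :=
  sum_nonneg fun x _ => EReal.mul_nonneg (EReal.coe_nonneg.2 (hπ x))
    (sum_klTerm_nonneg (hM.isProbMass_row x) (hL.isProbMass_row x))

lemma eq_of_klDiv_eq_zero {π : Y → ℝ} (hπ : ∀ x, 0 < π x) {M L : Y → Y → ℝ}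
    (hM : IsTransMat M) (hL : IsTransMat L) (h : klDiv π M L = 0) : M = L := by
  have hrows := (sum_eq_zero_iff_of_nonneg fun x _ => EReal.mul_nonneg
    (EReal.coe_nonneg.2 (hπ x).le)
    (sum_klTerm_nonneg (hM.isProbMass_row x) (hL.isProbMass_row x))).1 h
  funext x
  refine eq_of_sum_klTerm_eq_zero (hM.isProbMass_row x) (hL.isProbMass_row x) ?_
  exact (mul_eq_zero.1 (hrows x (mem_univ x))).resolve_left (EReal.coe_ne_zero.2 (hπ x).ne')

end KLDivergence

section Marginals

variable {d : ℕ} {X : Fin d → Type*}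

lemma restr_eq_iff {S : Finset (Fin d)} {x : ∀ i, X i} {xs : ∀ j : S, X j.1} :
    restr S x = xs ↔ ∀ j : S, x j.1 = xs j :=
  funext_iff

lemma exists_restr_eq [∀ i, Nonempty (X i)] (S : Finset (Fin d)) (xs : ∀ j : S, X j.1) :
    ∃ x : ∀ i, X i, restr S x = xs :=
  ⟨fun i => if h : i ∈ S then xs ⟨i, h⟩ else Classical.arbitrary _,
    funext fun j => dif_pos j.2⟩

variable [∀ i, Fintype (X i)]

lemma sum_fiber_mul {A B : Type*} [Fintype A] [Fintype B] (g : A → B) (F : A → ℝ) (f : B → ℝ) :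
    ∑ b, (∑ a, if g a = b then F a else 0) * f b = ∑ a, F a * f (g a) := by
  simp only [sum_mul, ite_mul, zero_mul]
  rw [sum_comm]
  exact sum_congr rfl fun a _ => by simp

noncomputable def blockMass (π : (∀ i, X i) → ℝ) (P : (∀ i, X i) → (∀ i, X i) → ℝ)
    (S : Finset (Fin d)) (xs ys : ∀ j : S, X j.1) : ℝ :=
  ∑ x, ∑ y, if restr S x = xs ∧ restr S y = ys then π x * P x y else 0

lemma margS_eq_sum (π : (∀ i, X i) → ℝ) (S : Finset (Fin d)) (xs : ∀ j : S, X j.1) :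
    margS π S xs = ∑ x, if restr S x = xs then π x else 0 := by
  simp only [margS, restr_eq_iff]

lemma keepS_eq_blockMass_div (π : (∀ i, X i) → ℝ) (P : (∀ i, X i) → (∀ i, X i) → ℝ)
    (S : Finset (Fin d)) (xs ys : ∀ j : S, X j.1) :
    keepS π P S xs ys = blockMass π P S xs ys / margS π S xs := by
  simp only [keepS, blockMass, restr_eq_iff]

lemma sum_blockMass_mul (π : (∀ i, X i) → ℝ) (P : (∀ i, X i) → (∀ i, X i) → ℝ)
    (S : Finset (Fin d)) (f : (∀ j : S, X j.1) → (∀ j : S, X j.1) → ℝ) :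
    ∑ xs, ∑ ys, blockMass π P S xs ys * f xs ys =
      ∑ x, ∑ y, π x * P x y * f (restr S x) (restr S y) := by
  have h := sum_fiber_mul (fun q : (∀ i, X i) × (∀ i, X i) => (restr S q.1, restr S q.2))
    (fun q => π q.1 * P q.1 q.2) (fun p => f p.1 p.2)
  simp only [Fintype.sum_prod_type, Prod.mk.injEq] at h
  exact h

variable {π : (∀ i, X i) → ℝ} {P : (∀ i, X i) → (∀ i, X i) → ℝ}

lemma margS_pos [∀ i, Nonempty (X i)] (hπ : ∀ x, 0 < π x) (S : Finset (Fin d))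
    (xs : ∀ j : S, X j.1) : 0 < margS π S xs := by
  obtain ⟨x, hx⟩ := exists_restr_eq S xs
  rw [margS_eq_sum]
  calc 0 < π x := hπ x
    _ = if restr S x = xs then π x else 0 := (if_pos hx).symm
    _ ≤ ∑ x, if restr S x = xs then π x else 0 :=
      single_le_sum (f := fun x' => if restr S x' = xs then π x' else 0)
        (fun x' _ => by split_ifs <;> simp [(hπ x').le]) (mem_univ x)

lemma mul_le_blockMass (hπ : ∀ x, 0 ≤ π x) (hP : ∀ x y, 0 ≤ P x y) (S : Finset (Fin d))
    (x y : ∀ i, X i) : π x * P x y ≤ blockMass π P S (restr S x) (restr S y) := by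
  have hterm : ∀ x' y', 0 ≤ if restr S x' = restr S x ∧ restr S y' = restr S y
      then π x' * P x' y' else 0 := fun x' y' => by
    split_ifs
    exacts [mul_nonneg (hπ x') (hP x' y'), le_rfl]
  calc π x * P x y
      = if restr S x = restr S x ∧ restr S y = restr S y then π x * P x y else 0 :=
        (if_pos ⟨rfl, rfl⟩).symm
    _ ≤ ∑ y', if restr S x = restr S x ∧ restr S y' = restr S y then π x * P x y' else 0 :=
        single_le_sum (fun y' _ => hterm x y') (mem_univ y)
    _ ≤ blockMass π P S (restr S x) (restr S y) :=
        single_le_sum (fun x' _ => sum_nonneg fun y' _ => hterm x' y') (mem_univ x)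

lemma keepS_restr_pos [∀ i, Nonempty (X i)] (hπ : ∀ x, 0 < π x) (hP : ∀ x y, 0 ≤ P x y)
    (S : Finset (Fin d)) {x y : ∀ i, X i} (hxy : P x y ≠ 0) :
    0 < keepS π P S (restr S x) (restr S y) := by
  rw [keepS_eq_blockMass_div]
  refine div_pos ?_ (margS_pos hπ S _)
  exact (mul_pos (hπ x) ((hP x y).lt_of_ne' hxy)).trans_le
    (mul_le_blockMass (fun x => (hπ x).le) hP S x y)

lemma exists_of_keepS_ne_zero {S : Finset (Fin d)} {xs ys : ∀ j : S, X j.1}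
    (h : keepS π P S xs ys ≠ 0) : ∃ x y, restr S x = xs ∧ restr S y = ys ∧ P x y ≠ 0 := by
  rw [keepS_eq_blockMass_div] at h
  obtain ⟨x, -, hx⟩ := exists_ne_zero_of_sum_ne_zero (left_ne_zero_of_mul h)
  obtain ⟨y, -, hy⟩ := exists_ne_zero_of_sum_ne_zero hx
  obtain ⟨hcond, hy⟩ := ite_ne_right_iff.1 hy
  exact ⟨x, y, hcond.1, hcond.2, right_ne_zero_of_mul hy⟩

lemma sum_margS_mul_keepS_mul [∀ i, Nonempty (X i)] (hπ : ∀ x, 0 < π x) (S : Finset (Fin d))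
    (f : (∀ j : S, X j.1) → (∀ j : S, X j.1) → ℝ) :
    ∑ xs, ∑ ys, margS π S xs * keepS π P S xs ys * f xs ys =
      ∑ x, ∑ y, π x * P x y * f (restr S x) (restr S y) := by
  simp_rw [keepS_eq_blockMass_div, mul_div_cancel₀ _ (margS_pos hπ S _).ne']
  exact sum_blockMass_mul π P S f

lemma isTransMat_keepS [∀ i, Nonempty (X i)] (hπ : ∀ x, 0 < π x) (hP : IsTransMat P)
    (S : Finset (Fin d)) : IsTransMat (keepS π P S) := by
  refine ⟨fun xs ys => ?_, fun xs => ?_⟩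
  · rw [keepS_eq_blockMass_div]
    exact div_nonneg (sum_nonneg fun x _ => sum_nonneg fun y _ => by
      split_ifs
      exacts [mul_nonneg (hπ x).le (hP.1 x y), le_rfl]) (margS_pos hπ S xs).le
  · -- test the grouping identity against the indicator of the row `xs`
    have h := sum_margS_mul_keepS_mul (P := P) hπ S fun xs' _ => if xs' = xs then 1 else 0
    simp only [mul_ite, mul_one, mul_zero] at h
    have hrow : margS π S xs * ∑ ys, keepS π P S xs ys = margS π S xs * 1 := by
      calc margS π S xs * ∑ ys, keepS π P S xs ys
          = ∑ xs', ∑ ys, if xs' = xs then margS π S xs' * keepS π P S xs' ys else 0 := by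
            simp [mul_sum]
        _ = ∑ x, ∑ y, if restr S x = xs then π x * P x y else 0 := h
        _ = ∑ x, if restr S x = xs then π x else 0 := sum_congr rfl fun x _ => by
            split_ifs
            · rw [← mul_sum, hP.2, mul_one]
            · exact sum_const_zero
        _ = margS π S xs * 1 := by rw [mul_one, margS_eq_sum]
    exact mul_left_cancel₀ (margS_pos hπ S xs).ne' hrow

end Marginals

lemma mul_log_div_prod_eq {ι : Type*} [Fintype ι] {p : ℝ} {q l : ι → ℝ}
    (hq : p ≠ 0 → ∀ i, q i ≠ 0) (hl : p ≠ 0 → ∀ i, l i ≠ 0) :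
    p * Real.log (p / ∏ i, l i) =
      p * Real.log (p / ∏ i, q i) + ∑ i, p * Real.log (q i / l i) := by
  rcases eq_or_ne p 0 with rfl | hp
  · simp
  · have hq' := hq hp
    have hl' := hl hp
    rw [Real.log_div hp (prod_ne_zero_iff.2 fun i _ => hl' i),
      Real.log_div hp (prod_ne_zero_iff.2 fun i _ => hq' i),
      Real.log_prod (fun i _ => hl' i), Real.log_prod (fun i _ => hq' i), ← mul_sum,
      sum_congr rfl fun i _ => Real.log_div (hq' i) (hl' i), sum_sub_distrib]
    ring

section Decomposition

variable {d n : ℕ} {X : Fin d → Type*} [∀ i, Fintype (X i)] [∀ i, Nonempty (X i)]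
  {π : (∀ i, X i) → ℝ} {P : (∀ i, X i) → (∀ i, X i) → ℝ}

lemma sum_mul_log_keepS_div (hπ : ∀ x, 0 < π x) (S : Finset (Fin d))
    (L : (∀ j : S, X j.1) → (∀ j : S, X j.1) → ℝ) :
    ∑ x, π x * ∑ y, P x y *
        Real.log (keepS π P S (restr S x) (restr S y) / L (restr S x) (restr S y)) =
      klDivReal (margS π S) (keepS π P S) L := by
  simp_rw [klDivReal, mul_sum, ← mul_assoc]
  exact (sum_margS_mul_keepS_mul hπ S fun xs ys => Real.log (keepS π P S xs ys / L xs ys)).symm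

lemma klDiv_tensorBlocks_keepS_eq_coe (hπ : ∀ x, 0 < π x) (hP : ∀ x y, 0 ≤ P x y)
    (S : Fin n → Finset (Fin d)) :
    klDiv π P (tensorBlocks S fun i => keepS π P (S i)) =
      (klDivReal π P (tensorBlocks S fun i => keepS π P (S i)) : EReal) :=
  klDiv_eq_coe_klDivReal π fun _ _ hxy =>
    prod_ne_zero_iff.2 fun i _ => (keepS_restr_pos hπ hP (S i) hxy).ne'

lemma klDivReal_tensorBlocks_eq_add (hπ : ∀ x, 0 < π x) (hP : ∀ x y, 0 ≤ P x y)
    (S : Fin n → Finset (Fin d)) (L : ∀ i : Fin n, (∀ j : S i, X j.1) → (∀ j : S i, X j.1) → ℝ)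
    (hsupp : ∀ i xs ys, keepS π P (S i) xs ys ≠ 0 → L i xs ys ≠ 0) :
    klDivReal π P (tensorBlocks S L) =
      klDivReal π P (tensorBlocks S fun i => keepS π P (S i)) +
        ∑ i, klDivReal (margS π (S i)) (keepS π P (S i)) (L i) := by
  have hpoint := fun x y => mul_log_div_prod_eq (p := P x y)
    (fun hxy i => (keepS_restr_pos hπ hP (S i) hxy).ne')
    (fun hxy i => hsupp i _ _ (keepS_restr_pos hπ hP (S i) hxy).ne')
  simp_rw [← sum_mul_log_keepS_div hπ]
  simp only [klDivReal, tensorBlocks, hpoint, sum_add_distrib, mul_add, mul_sum]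
  exact congrArg _ ((sum_congr rfl fun x _ => sum_comm).trans sum_comm)

lemma klDiv_tensorBlocks_eq_add (hπ : ∀ x, 0 < π x) (hP : ∀ x y, 0 ≤ P x y)
    (S : Fin n → Finset (Fin d)) (L : ∀ i : Fin n, (∀ j : S i, X j.1) → (∀ j : S i, X j.1) → ℝ) :
    klDiv π P (tensorBlocks S L) =
      klDiv π P (tensorBlocks S fun i => keepS π P (S i)) +
        ∑ i, klDiv (margS π (S i)) (keepS π P (S i)) (L i) := by
  have hmarg : ∀ i xs, 0 ≤ margS π (S i) xs := fun i xs => (margS_pos hπ (S i) xs).le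
  by_cases hsupp : ∀ i xs ys, keepS π P (S i) xs ys ≠ 0 → L i xs ys ≠ 0
  · have hL : ∀ x y, P x y ≠ 0 → tensorBlocks S L x y ≠ 0 := fun _ _ hxy =>
      prod_ne_zero_iff.2 fun i _ => hsupp i _ _ (keepS_restr_pos hπ hP (S i) hxy).ne'
    rw [klDiv_eq_coe_klDivReal π hL, klDiv_tensorBlocks_keepS_eq_coe hπ hP,
      sum_congr rfl fun i _ => klDiv_eq_coe_klDivReal _ (hsupp i), ← EReal.coe_finset_sum,
      ← EReal.coe_add, klDivReal_tensorBlocks_eq_add hπ hP S L hsupp]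
  · push Not at hsupp
    obtain ⟨i, xs, ys, hQ, hL⟩ := hsupp
    obtain ⟨x, y, rfl, rfl, hxy⟩ := exists_of_keepS_ne_zero hQ
    have hLt : tensorBlocks S L x y = 0 := prod_eq_zero (mem_univ i) hL
    rw [klDiv_eq_top (fun x => (hπ x).le) (hπ x) hxy hLt,
      EReal.finset_sum_eq_top (fun i _ => klDiv_ne_bot (hmarg i) _ _) (mem_univ i)
        (klDiv_eq_top (hmarg i) (margS_pos hπ _ _) hQ hL),
      EReal.add_top_of_ne_bot (klDiv_ne_bot (fun x => (hπ x).le) _ _)]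

end Decomposition

theorem stmt14_general {d n : ℕ} {X : Fin d → Type*} [∀ i, Fintype (X i)]
    (S : Fin n → Finset (Fin d))
    (π : (∀ i, X i) → ℝ) (hπ : IsProbMass π) (hpos : ∀ x, 0 < π x)
    (P : (∀ i, X i) → (∀ i, X i) → ℝ) (hP : IsTransMat P)
    (L : ∀ i : Fin n, (∀ j : S i, X j.1) → (∀ j : S i, X j.1) → ℝ)
    (hL : ∀ i, IsTransMat (L i)) :
    klDiv π P (tensorBlocks S L) =
        klDiv π P (tensorBlocks S fun i => keepS π P (S i)) +
          ∑ i, klDiv (margS π (S i)) (keepS π P (S i)) (L i) ∧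
      klDiv π P (tensorBlocks S fun i => keepS π P (S i)) ≤ klDiv π P (tensorBlocks S L) ∧
      (klDiv π P (tensorBlocks S L) =
          klDiv π P (tensorBlocks S fun i => keepS π P (S i)) →
        L = fun i => keepS π P (S i)) := by
  obtain ⟨x₀⟩ : Nonempty (∀ i, X i) :=
    univ_nonempty_iff.1 (nonempty_of_sum_ne_zero (hπ.2 ▸ one_ne_zero))
  have : ∀ i, Nonempty (X i) := fun i => ⟨x₀ i⟩
  have hdecomp := klDiv_tensorBlocks_eq_add hpos hP.1 S L
  have hblock_nonneg : ∀ i, 0 ≤ klDiv (margS π (S i)) (keepS π P (S i)) (L i) := fun i =>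
    klDiv_nonneg (fun xs => (margS_pos hpos (S i) xs).le) (isTransMat_keepS hpos hP (S i)) (hL i)
  refine ⟨hdecomp, ?_, fun h => funext fun i => ?_⟩
  · rw [hdecomp]
    exact le_add_of_nonneg_right (sum_nonneg fun i _ => hblock_nonneg i)
  · rw [h, klDiv_tensorBlocks_keepS_eq_coe hpos hP.1] at hdecomp
    have hsum := EReal.eq_zero_of_coe_add_eq hdecomp.symm
    exact (eq_of_klDiv_eq_zero (margS_pos hpos (S i)) (isTransMat_keepS hpos hP (S i)) (hL i)
      ((sum_eq_zero_iff_of_nonneg fun i _ => hblock_nonneg i).1 hsum i (mem_univ i))).symm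

/-- Pythagorean identity for block factorizations: for a partition `(Sᵢ)` of `⟦d⟧` into
nonempty disjoint blocks, `D_KL^π(P ‖ ⊗ᵢ Lᵢ)` decomposes as the divergence to the tensor
product of the keep-`Sᵢ`-in matrices plus the sum of the block divergences; consequently
`⊗ᵢ P_π^{(Sᵢ)}` is the unique minimizer. -/
theorem stmt14 {d n : ℕ} {X : Fin d → Type*} [∀ i, Fintype (X i)]
    (S : Fin n → Finset (Fin d)) (hne : ∀ i, (S i).Nonempty)
    (hdisj : ∀ i i', i ≠ i' → Disjoint (S i) (S i'))
    (hcov : ∀ j : Fin d, ∃ i, j ∈ S i)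
    (π : (∀ i, X i) → ℝ) (hπ : IsProbMass π) (hpos : ∀ x, 0 < π x)
    (P : (∀ i, X i) → (∀ i, X i) → ℝ) (hP : IsTransMat P)
    (L : ∀ i : Fin n, (∀ j : S i, X j.1) → (∀ j : S i, X j.1) → ℝ)
    (hL : ∀ i, IsTransMat (L i)) :
    klDiv π P (tensorBlocks S L) =
        klDiv π P (tensorBlocks S fun i => keepS π P (S i)) +
          ∑ i, klDiv (margS π (S i)) (keepS π P (S i)) (L i) ∧
      klDiv π P (tensorBlocks S fun i => keepS π P (S i)) ≤ klDiv π P (tensorBlocks S L) ∧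
      (klDiv π P (tensorBlocks S L) =
          klDiv π P (tensorBlocks S fun i => keepS π P (S i)) →
        L = fun i => keepS π P (S i)) :=
  stmt14_general S π hπ hpos P hP L hL
end
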